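/- With G_n, Ĝ_n, and t_n as in the binary-tree construction: Z(G_n) = Z(Ĝ_n) = t_n + 1. -/

import Mathlib

/-- The zero forcing closure: vertices that eventually become black when the
vertices of `S` are initially black and we repeatedly apply the rule that a
white vertex `u` becomes black if it is the unique white neighbor of some black
vertex `v` (we say `v` forces `u`). -/
inductive ZFClosure {V : Type*} (G : SimpleGraph V) (S : Set V) : V → Prop
  | init (v : V) : v ∈ S → ZFClosure G S v
  | force (u v : V) : G.Adj v u → ZFClosure G S v →
      (∀ w, G.Adj v w → w ≠ u → ZFClosure G S w) → ZFClosure G S u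

/-- `S` is a zero forcing set of `G` if every vertex eventually becomes black. -/
def IsZeroForcingSet {V : Type*} (G : SimpleGraph V) (S : Set V) : Prop :=
  ∀ v, ZFClosure G S v

/-- The zero forcing number `Z(G)`: the minimum cardinality of a zero forcing set. -/
noncomputable def zeroForcingNumber {V : Type*} (G : SimpleGraph V) : ℕ :=
  sInf {k | ∃ S : Set V, S.ncard = k ∧ IsZeroForcingSet G S}

/-- One-sided edge relation of the subdivided `K₄`: vertices `a b c d e = 0 1 2 3 4`,
edges `ad, db, ac, cb, ae, eb, ce`; here `d = 3` is the subdivision vertex. -/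
def subK4Rel : Fin 5 → Fin 5 → Prop := fun x y =>
  (x, y) ∈ [((0 : Fin 5), (3 : Fin 5)), (3, 1), (0, 2), (2, 1), (0, 4), (4, 1), (2, 4)]

/-- The subdivided `K₄`: the complete graph on `{a, b, c, e}` with the edge `ab`
replaced by the path `a–d–b`. -/
def subK4 : SimpleGraph (Fin 5) := SimpleGraph.fromRel subK4Rel

/-- Vertices of the graph `G_{n+1}` of the binary-tree construction: `GV n` is
obtained from the complete binary tree `B_{2(n+1)-1}` by replacing every leaf with
a subdivided `K₄` (attached via its subdivision vertex `3`).  `GV 0` is a single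
subdivided `K₄`; `GV (n+1)` consists of a root, two middle vertices `mid b`
(the vertices `y_n^1, y_n^2`), and four copies `child b c` of `GV n`. -/
inductive GV : ℕ → Type
  | base : Fin 5 → GV 0
  | root {n : ℕ} : GV (n + 1)
  | mid {n : ℕ} : Bool → GV (n + 1)
  | child {n : ℕ} : Bool → Bool → GV n → GV (n + 1)

/-- The root `r_{n+1}` of `G_{n+1}` (for a single subdivided `K₄` it is the
subdivision vertex `3`). -/
def rootV : (n : ℕ) → GV n
  | 0 => .base 3
  | _ + 1 => .root

/-- One-sided edge relation of `G_{n+1}`: the root is joined to the two middle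
vertices, each middle vertex is joined to the roots of its two copies of the
previous construction, and each copy keeps its own edges. -/
def gAdj : {n : ℕ} → GV n → GV n → Prop
  | 0, .base i, .base j => subK4Rel i j
  | _ + 1, .root, .mid _ => True
  | n + 1, .mid b, .child b' _ x => b = b' ∧ x = rootV n
  | _ + 1, .child b c x, .child b' c' y => b = b' ∧ c = c' ∧ gAdj x y
  | _ + 1, _, _ => False

/-- The graph `G_{n+1}` of the binary-tree construction (the complete binary tree
`B_{2(n+1)-1}` with every leaf replaced by a subdivided `K₄`). -/
def Gtree (n : ℕ) : SimpleGraph (GV n) := SimpleGraph.fromRel gAdj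

/-- One-sided edge relation of `Ĝ_{n+1}`: `G_{n+1}` together with one extra pendant
vertex `none` (the vertex `y_{n+1}`) attached to the root. -/
def hatAdj (n : ℕ) : Option (GV n) → Option (GV n) → Prop
  | some x, some y => gAdj x y
  | none, some x => x = rootV n
  | _, _ => False

/-- The graph `Ĝ_{n+1}`: `G_{n+1}` with a new pendant vertex attached to the root. -/
def hatGtree (n : ℕ) : SimpleGraph (Option (GV n)) := SimpleGraph.fromRel (hatAdj n)

/-- The sequence `t_{n+1}` (0-indexed): `t 0 = t_1 = 2` and `t (n+1) = 4 * t n + 2`. -/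
def tseq : ℕ → ℕ
  | 0 => 2
  | n + 1 => 4 * tseq n + 2


/-!
Upper bound: by induction on `n` there are a set `W` of `t_n + 1` vertices and a set `A` of `t_n`
vertices of `G_n` such that, in any graph containing `G_n` attached only through its root, `W`
forces the copy, and `A` forces it once the root and its outside neighbours are black. For
`G_{n+1}`, put `W` into three of the four copies of `G_n` and `A` into the fourth: the copies
holding `W` force their middle vertices, one middle vertex then forces the root of `G_{n+1}`, and
the other one the root of the copy holding `A`. If the root of `G_{n+1}` is black from the start,
`W` and `A` below each middle vertex suffice.

Lower bound: if `X` forces `G_n` inside `Ĝ_n` with the pendant black, then `|X| ≥ t_n`, and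
`|X| ≥ t_n + 1` if `X` alone already forces the root. Inside `G_{n+1}`, every copy of `G_n`
restricted to `X` is of this kind, its middle vertex playing the pendant. Two copies of size
`t_n` below the same middle vertex are impossible: neither root can be forced from inside its
copy, and the middle vertex forces one only after the other. This gives `|X| ≥ 4 t_n + 2`. If
moreover `X` forces the root of `G_{n+1}` without the pendant and `|X| = 4 t_n + 2`, each middle
vertex has a copy of size `t_n` below it; the root can only be forced by a middle vertex after
the root of that copy, which in turn can then only be forced from inside the copy.
-/

section ZeroForcing

variable {V : Type*} {G : SimpleGraph V}

theorem ZFClosure.mono {S T : Set V} (hST : S ⊆ T) {v : V} (h : ZFClosure G S v) :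
    ZFClosure G T v := by
  induction h with
  | init v hv => exact .init v (hST hv)
  | force u w hadj _ _ ihw ihprem => exact .force u w hadj ihw ihprem

variable [Fintype V] [DecidableEq V] [DecidableRel G.Adj]

variable (G) in
def forcingStep (B : Finset V) : Finset V :=
  B ∪ Finset.univ.filter fun u => ∃ v ∈ B, G.Adj v u ∧ ∀ w, G.Adj v w → w ≠ u → w ∈ B

variable (G) in
def forcingClosure (S : Finset V) : Finset V :=
  (forcingStep G)^[Fintype.card V] S

variable (G) in
def ForcingStalls (S : Finset V) (v : V) : Prop :=
  forcingStep G (forcingClosure G S) = forcingClosure G S ∧ v ∉ forcingClosure G S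

instance (S : Finset V) (v : V) : Decidable (ForcingStalls G S v) :=
  inferInstanceAs (Decidable (_ ∧ _))

theorem ZFClosure.mem_of_forcingStep_eq {S : Set V} {B : Finset V} (hSB : S ⊆ B)
    (hB : forcingStep G B = B) {v : V} (h : ZFClosure G S v) : v ∈ B := by
  induction h with
  | init v hv => exact hSB hv
  | force u w hadj _ _ ihw ihprem =>
    rw [← hB]
    exact Finset.mem_union_right _ (Finset.mem_filter.mpr ⟨Finset.mem_univ _, w, ihw, hadj, ihprem⟩)

theorem ForcingStalls.not_zfClosure {S : Finset V} {v : V} (h : ForcingStalls G S v) :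
    ¬ ZFClosure G S v := fun hv =>
  h.2 (hv.mem_of_forcingStep_eq (Function.id_le_iterate_of_id_le
    (fun _ => Finset.subset_union_left) _ S) h.1)

end ZeroForcing

namespace GV

def equivZero : GV 0 ≃ Fin 5 where
  toFun | .base i => i
  invFun := .base
  left_inv | .base _ => rfl
  right_inv _ := rfl

def equivSucc (n : ℕ) : GV (n + 1) ≃ Unit ⊕ Bool ⊕ Bool × Bool × GV n where
  toFun
    | .root => .inl ()
    | .mid b => .inr (.inl b)
    | .child b c y => .inr (.inr (b, c, y))
  invFun
    | .inl _ => .root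
    | .inr (.inl b) => .mid b
    | .inr (.inr (b, c, y)) => .child b c y
  left_inv x := by cases x <;> rfl
  right_inv x := by rcases x with _ | _ | ⟨_, _, _⟩ <;> rfl

instance instDecidableEq : (n : ℕ) → DecidableEq (GV n)
  | 0 => equivZero.decidableEq
  | n + 1 => letI := instDecidableEq n; (equivSucc n).decidableEq

instance instFintype : (n : ℕ) → Fintype (GV n)
  | 0 => Fintype.ofEquiv _ equivZero.symm
  | n + 1 => letI := instFintype n; Fintype.ofEquiv _ (equivSucc n).symm

theorem child_injective {n : ℕ} (b c : Bool) : Function.Injective (child b c : GV n → GV (n + 1)) :=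
  fun _ _ h => (child.inj h).2.2

end GV

section Adjacency

variable {n : ℕ}

@[simp] theorem rootV_succ : rootV (n + 1) = .root := rfl

@[simp] theorem Gtree_adj_mid_root {b : Bool} : (Gtree (n + 1)).Adj (.mid b) .root := by
  simp [Gtree, gAdj]

@[simp] theorem Gtree_not_adj_root_child {b c : Bool} {x : GV n} :
    ¬ (Gtree (n + 1)).Adj .root (.child b c x) := by
  simp [Gtree, gAdj]

@[simp] theorem Gtree_not_adj_child_root {b c : Bool} {x : GV n} :
    ¬ (Gtree (n + 1)).Adj (.child b c x) .root := by
  simp [Gtree, gAdj]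

@[simp] theorem Gtree_not_adj_mid_mid {b b' : Bool} :
    ¬ (Gtree (n + 1)).Adj (.mid b) (.mid b') := by
  simp [Gtree, gAdj]

@[simp] theorem Gtree_adj_mid_child {b b' c : Bool} {x : GV n} :
    (Gtree (n + 1)).Adj (.mid b') (.child b c x) ↔ b' = b ∧ x = rootV n := by
  simp [Gtree, gAdj]

@[simp] theorem Gtree_adj_child_mid {b b' c : Bool} {x : GV n} :
    (Gtree (n + 1)).Adj (.child b c x) (.mid b') ↔ b' = b ∧ x = rootV n := by
  simp [Gtree, gAdj]

@[simp] theorem Gtree_adj_child_child {b c b' c' : Bool} {x y : GV n} :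
    (Gtree (n + 1)).Adj (.child b c x) (.child b' c' y) ↔
      b = b' ∧ c = c' ∧ (Gtree n).Adj x y := by
  simp [Gtree, gAdj]
  grind

@[simp] theorem hatGtree_adj_some_some {x y : GV n} :
    (hatGtree n).Adj (some x) (some y) ↔ (Gtree n).Adj x y := by
  simp [hatGtree, Gtree, hatAdj]

@[simp] theorem hatGtree_adj_none_some {x : GV n} :
    (hatGtree n).Adj none (some x) ↔ x = rootV n := by
  simp [hatGtree, hatAdj]

@[simp] theorem hatGtree_adj_some_none {x : GV n} :
    (hatGtree n).Adj (some x) none ↔ x = rootV n := by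
  simp [hatGtree, hatAdj]

instance : DecidableRel (gAdj (n := 0))
  | .base i, .base j => inferInstanceAs (Decidable ((i, j) ∈ _))

instance : DecidableRel (Gtree 0).Adj := fun x y =>
  decidable_of_iff' _ (SimpleGraph.fromRel_adj _ x y)

instance : DecidableRel (hatAdj 0)
  | some x, some y => inferInstanceAs (Decidable (gAdj x y))
  | none, some x => inferInstanceAs (Decidable (x = rootV 0))
  | some _, none => isFalse id
  | none, none => isFalse id

instance : DecidableRel (hatGtree 0).Adj := fun x y =>
  decidable_of_iff' _ (SimpleGraph.fromRel_adj _ x y)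

end Adjacency

section AttachedCopy

structure IsAttachedCopy (n : ℕ) {V : Type*} (H : SimpleGraph V) (φ : GV n → V) : Prop where
  adj_iff : ∀ x y, H.Adj (φ x) (φ y) ↔ (Gtree n).Adj x y
  eq_root_of_adj : ∀ x u, H.Adj (φ x) u → u ∉ Set.range φ → x = rootV n

variable {n : ℕ} {V : Type*} {H : SimpleGraph V} {φ : GV n → V} {S : Set V}

theorem IsAttachedCopy.force (hφ : IsAttachedCopy n H φ) {v u : GV n}
    (hvu : (Gtree n).Adj v u) (hv : ZFClosure H S (φ v))
    (hnbr : ∀ y, (Gtree n).Adj v y → y ≠ u → ZFClosure H S (φ y))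
    (hout : v = rootV n → ∀ w, H.Adj (φ v) w → w ∉ Set.range φ → ZFClosure H S w) :
    ZFClosure H S (φ u) := by
  refine .force _ _ ((hφ.adj_iff v u).mpr hvu) hv fun w hw hne => ?_
  by_cases hrange : w ∈ Set.range φ
  · obtain ⟨y, rfl⟩ := hrange
    exact hnbr y ((hφ.adj_iff v y).mp hw) (fun h => hne (congrArg φ h))
  · exact hout (hφ.eq_root_of_adj v w hw hrange) w hw hrange

theorem IsAttachedCopy.eq_mid_of_adj_child {φ : GV (n + 1) → V}
    (hφ : IsAttachedCopy (n + 1) H φ) {b c : Bool} {x : GV n} {u : V}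
    (hu : H.Adj (φ (.child b c x)) u) (hrange : ∀ y, u ≠ φ (.child b c y)) :
    x = rootV n ∧ u = φ (.mid b) := by
  by_cases hu' : u ∈ Set.range φ
  · obtain ⟨z, rfl⟩ := hu'
    rw [hφ.adj_iff] at hu
    cases z with
    | root => simp at hu
    | mid b' =>
      obtain ⟨rfl, rfl⟩ := Gtree_adj_child_mid.mp hu
      exact ⟨rfl, rfl⟩
    | child b' c' y =>
      obtain ⟨rfl, rfl, -⟩ := Gtree_adj_child_child.mp hu
      exact absurd rfl (hrange y)
  · exact absurd (hφ.eq_root_of_adj _ u hu hu') (by simp)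

theorem IsAttachedCopy.child {φ : GV (n + 1) → V} (hφ : IsAttachedCopy (n + 1) H φ)
    (b c : Bool) : IsAttachedCopy n H (fun x => φ (.child b c x)) where
  adj_iff x y := by simp [hφ.adj_iff]
  eq_root_of_adj _ _ hu hrange :=
    (hφ.eq_mid_of_adj_child hu fun y h => hrange ⟨y, h.symm⟩).1

end AttachedCopy

section UpperBound

variable {n : ℕ}

def ForcesAttachedCopies (W : Finset (GV n)) : Prop :=
  ∀ (V : Type) (H : SimpleGraph V) (φ : GV n → V) (S : Set V), IsAttachedCopy n H φ →
    (∀ w ∈ W, ZFClosure H S (φ w)) → ∀ x, ZFClosure H S (φ x)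

def ForcesAttachedCopiesFromRoot (A : Finset (GV n)) : Prop :=
  ∀ (V : Type) (H : SimpleGraph V) (φ : GV n → V) (S : Set V), IsAttachedCopy n H φ →
    (∀ u, H.Adj (φ (rootV n)) u → u ∉ Set.range φ → ZFClosure H S u) →
    ZFClosure H S (φ (rootV n)) → (∀ a ∈ A, ZFClosure H S (φ a)) → ∀ x, ZFClosure H S (φ x)

theorem forcesAttachedCopies_zero :
    ForcesAttachedCopies ({.base 0, .base 2, .base 4} : Finset (GV 0)) := by
  intro V H φ S hφ hW
  have h0 := hW (.base 0) (by decide)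
  have h2 := hW (.base 2) (by decide)
  have h4 := hW (.base 4) (by decide)
  have nbr2 : ∀ y, (Gtree 0).Adj (.base 2) y → y ≠ .base 1 → y = .base 0 ∨ y = .base 4 := by
    decide
  have nbr0 : ∀ y, (Gtree 0).Adj (.base 0) y → y ≠ .base 3 → y = .base 2 ∨ y = .base 4 := by
    decide
  have h1 : ZFClosure H S (φ (.base 1)) := hφ.force (v := .base 2) (by decide) h2
    (fun y hy hne => (nbr2 y hy hne).elim (· ▸ h0) (· ▸ h4)) (absurd · (by decide))
  have h3 : ZFClosure H S (φ (.base 3)) := hφ.force (v := .base 0) (by decide) h0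
    (fun y hy hne => (nbr0 y hy hne).elim (· ▸ h2) (· ▸ h4)) (absurd · (by decide))
  rintro ⟨i⟩
  fin_cases i <;> assumption

theorem forcesAttachedCopiesFromRoot_zero :
    ForcesAttachedCopiesFromRoot ({.base 0, .base 2} : Finset (GV 0)) := by
  intro V H φ S hφ hout h3 hA
  have h0 := hA (.base 0) (by decide)
  have h2 := hA (.base 2) (by decide)
  have nbr3 : ∀ y, (Gtree 0).Adj (.base 3) y → y ≠ .base 1 → y = .base 0 := by decide
  have nbr0 : ∀ y, (Gtree 0).Adj (.base 0) y → y ≠ .base 4 → y = .base 2 ∨ y = .base 3 := by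
    decide
  have h1 : ZFClosure H S (φ (.base 1)) := hφ.force (v := .base 3) (by decide) h3
    (fun y hy hne => nbr3 y hy hne ▸ h0) (fun _ => hout)
  have h4 : ZFClosure H S (φ (.base 4)) := hφ.force (v := .base 0) (by decide) h0
    (fun y hy hne => (nbr0 y hy hne).elim (· ▸ h2) (· ▸ h3)) (absurd · (by decide))
  rintro ⟨i⟩
  fin_cases i <;> assumption

variable {V : Type*} {H : SimpleGraph V} {φ : GV (n + 1) → V} {S : Set V}

theorem IsAttachedCopy.force_mid (hφ : IsAttachedCopy (n + 1) H φ) (b c : Bool)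
    (hcopy : ∀ x, ZFClosure H S (φ (.child b c x))) : ZFClosure H S (φ (.mid b)) := by
  refine hφ.force (v := .child b c (rootV n)) (by simp) (hcopy _) (fun y hy hne => ?_) (by simp)
  cases y with
  | root => simp at hy
  | mid b' => simp_all
  | child b' c' z =>
    obtain ⟨rfl, rfl, -⟩ := Gtree_adj_child_child.mp hy
    exact hcopy z

theorem IsAttachedCopy.force_of_mid (hφ : IsAttachedCopy (n + 1) H φ) {b : Bool} {u : GV (n + 1)}
    (hu : (Gtree (n + 1)).Adj (.mid b) u) (hmid : ZFClosure H S (φ (.mid b)))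
    (hroot : u ≠ .root → ZFClosure H S (φ .root))
    (hsib : ∀ c, u ≠ .child b c (rootV n) → ZFClosure H S (φ (.child b c (rootV n)))) :
    ZFClosure H S (φ u) := by
  refine hφ.force hu hmid (fun y hy hne => ?_) (by simp)
  cases y with
  | root => exact hroot (Ne.symm hne)
  | mid b' => simp at hy
  | child b' c z =>
    obtain ⟨rfl, rfl⟩ := Gtree_adj_mid_child.mp hy
    exact hsib c (Ne.symm hne)

end UpperBound

section UpperStep

variable {n : ℕ}

def childFinset (F : Bool → Bool → Finset (GV n)) : Finset (GV (n + 1)) :=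
  Finset.univ.biUnion fun p : Bool × Bool => (F p.1 p.2).map ⟨_, GV.child_injective p.1 p.2⟩

@[simp] theorem mem_childFinset {F : Bool → Bool → Finset (GV n)} {b c : Bool} {x : GV n} :
    .child b c x ∈ childFinset F ↔ x ∈ F b c := by
  simp [childFinset]

@[simp] theorem root_notMem_childFinset {F : Bool → Bool → Finset (GV n)} :
    .root ∉ childFinset F := by
  simp [childFinset]

theorem card_childFinset (F : Bool → Bool → Finset (GV n)) :
    (childFinset F).card =
      (F true true).card + (F true false).card + (F false true).card + (F false false).card := by
  rw [childFinset, Finset.card_biUnion]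
  · simp [Fintype.sum_prod_type]
    ring
  · rintro ⟨b, c⟩ - ⟨b', c'⟩ - hne
    simp only [Function.onFun, Finset.disjoint_left, Finset.mem_map, Function.Embedding.coeFn_mk]
    rintro _ ⟨x, -, rfl⟩ ⟨y, -, h⟩
    obtain ⟨rfl, rfl, -⟩ := GV.child.inj h
    exact hne rfl

variable {W A : Finset (GV n)} {V : Type} {H : SimpleGraph V} {φ : GV (n + 1) → V} {S : Set V}

theorem IsAttachedCopy.forces_of_children (hW : ForcesAttachedCopies W)
    (hA : ForcesAttachedCopiesFromRoot A) (hφ : IsAttachedCopy (n + 1) H φ)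
    (hTT : ∀ w ∈ W, ZFClosure H S (φ (.child true true w)))
    (hFT : ∀ w ∈ W, ZFClosure H S (φ (.child false true w)))
    (hTF : (∀ w ∈ W, ZFClosure H S (φ (.child true false w))) ∨
      ZFClosure H S (φ .root) ∧ ∀ a ∈ A, ZFClosure H S (φ (.child true false a)))
    (hFF : ∀ a ∈ A, ZFClosure H S (φ (.child false false a))) :
    ∀ x, ZFClosure H S (φ x) := by
  have cTT := hW V H _ S (hφ.child true true) hTT
  have cFT := hW V H _ S (hφ.child false true) hFT
  have mT := hφ.force_mid true true cTT
  have mF := hφ.force_mid false true cFT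
  have fromRoot : ∀ b, ZFClosure H S (φ (.mid b)) → (∀ x, ZFClosure H S (φ (.child b true x))) →
      ZFClosure H S (φ .root) → (∀ a ∈ A, ZFClosure H S (φ (.child b false a))) →
      ∀ x, ZFClosure H S (φ (.child b false x)) := fun b hm hc hr hA' =>
    hA V H _ S (hφ.child b false)
      (fun u hu hrange => (hφ.eq_mid_of_adj_child hu fun y h => hrange ⟨y, h.symm⟩).2 ▸ hm)
      (hφ.force_of_mid (by simp) hm (fun _ => hr) fun c hc' => by
        cases c
        · exact absurd rfl hc'
        · exact hc _)
      hA'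
  have cTF : ∀ x, ZFClosure H S (φ (.child true false x)) := by
    rcases hTF with hTF | ⟨hR, hTF⟩
    · exact hW V H _ S (hφ.child true false) hTF
    · exact fromRoot true mT cTT hR hTF
  have hR : ZFClosure H S (φ .root) := hφ.force_of_mid (b := true) (by simp) mT
    (fun h => absurd rfl h) fun c _ => by cases c <;> simp only [cTF, cTT]
  have cFF := fromRoot false mF cFT hR hFF
  intro x
  rcases x with _ | _ | (_ | _) | ⟨(_ | _), (_ | _), y⟩
  exacts [hR, mF, mT, cFF y, cFT y, cTF y, cTT y]

theorem exists_forcesAttachedCopies (n : ℕ) :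
    (∃ W : Finset (GV n), W.card = tseq n + 1 ∧ ForcesAttachedCopies W) ∧
      ∃ A : Finset (GV n), A.card = tseq n ∧ ForcesAttachedCopiesFromRoot A := by
  induction n with
  | zero => exact ⟨⟨_, rfl, forcesAttachedCopies_zero⟩, ⟨_, rfl, forcesAttachedCopiesFromRoot_zero⟩⟩
  | succ n ih =>
    obtain ⟨⟨W, hWcard, hW⟩, ⟨A, hAcard, hA⟩⟩ := ih
    refine ⟨⟨childFinset fun b c => if b || c then W else A, ?_, ?_⟩,
      ⟨childFinset fun _ c => if c then W else A, ?_, ?_⟩⟩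
    · simp [card_childFinset, tseq, hWcard, hAcard]
      ring
    · intro V H φ S hφ hS
      exact hφ.forces_of_children hW hA (fun w hw => hS _ (by simpa using hw))
        (fun w hw => hS _ (by simpa using hw)) (.inl fun w hw => hS _ (by simpa using hw))
        (fun a ha => hS _ (by simpa using ha))
    · simp [card_childFinset, tseq, hWcard, hAcard]
      ring
    · intro V H φ S hφ _ hroot hS
      exact hφ.forces_of_children hW hA (fun w hw => hS _ (by simpa using hw))
        (fun w hw => hS _ (by simpa using hw)) (.inr ⟨hroot, fun a ha => hS _ (by simpa using ha)⟩)
        (fun a ha => hS _ (by simpa using ha))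

end UpperStep

theorem exists_isZeroForcingSet_Gtree (n : ℕ) :
    ∃ S : Set (GV n), S.ncard = tseq n + 1 ∧ IsZeroForcingSet (Gtree n) S := by
  obtain ⟨⟨W, hWcard, hW⟩, -⟩ := exists_forcesAttachedCopies n
  have hid : IsAttachedCopy n (Gtree n) id :=
    ⟨fun _ _ => Iff.rfl, fun _ u _ hu => absurd ⟨u, rfl⟩ hu⟩
  exact ⟨W, by simpa using hWcard, hW _ _ _ _ hid fun w hw => .init w hw⟩

theorem exists_isZeroForcingSet_hatGtree (n : ℕ) :
    ∃ S : Set (Option (GV n)), S.ncard = tseq n + 1 ∧ IsZeroForcingSet (hatGtree n) S := by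
  obtain ⟨⟨W, hWcard, hW⟩, -⟩ := exists_forcesAttachedCopies n
  have hsome : IsAttachedCopy n (hatGtree n) some := by
    refine ⟨fun _ _ => hatGtree_adj_some_some, fun x u hu hrange => ?_⟩
    cases u with
    | none => simpa using hu
    | some y => exact absurd ⟨y, rfl⟩ hrange
  have hforced := hW _ _ _ (some '' W) hsome fun w hw => .init _ ⟨w, hw, rfl⟩
  refine ⟨some '' W, by simpa [Set.ncard_image_of_injective _ (Option.some_injective _)], ?_⟩
  rintro (_ | x)
  · refine .force none (some (rootV n)) (by simp) (hforced _) fun v _ hne => ?_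
    cases v with
    | none => exact absurd rfl hne
    | some y => exact hforced y
  · exact hforced x

section LowerBound

variable {n : ℕ}

def ForcesWithPendant (X : Set (GV n)) : Prop :=
  ∀ x, ZFClosure (hatGtree n) (some '' X ∪ {none}) (some x)

structure PendantBounds (n : ℕ) : Prop where
  le_ncard : ∀ X : Set (GV n), ForcesWithPendant X → tseq n ≤ X.ncard
  lt_ncard : ∀ X : Set (GV n), ForcesWithPendant X →
    ZFClosure (hatGtree n) (some '' X) (some (rootV n)) → tseq n < X.ncard

set_option maxRecDepth 40000 in
theorem forcingStalls_hatGtree_zero : ∀ Y : Finset (GV 0),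
    (Y.card ≤ 1 → ∃ x, ForcingStalls (hatGtree 0) (insert none (Y.map .some)) (some x)) ∧
    (Y.card ≤ 2 → (∃ x, ForcingStalls (hatGtree 0) (insert none (Y.map .some)) (some x)) ∨
      ForcingStalls (hatGtree 0) (Y.map .some) (some (rootV 0))) := by
  decide

theorem pendantBounds_zero : PendantBounds 0 := by
  classical
  have hcard (X : Set (GV 0)) : X.ncard = X.toFinset.card := Set.ncard_eq_toFinset_card' X
  have hpend (X : Set (GV 0)) :
      ((insert none (X.toFinset.map .some) : Finset _) : Set (Option (GV 0))) =
        some '' X ∪ {none} := by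
    simp [Set.union_singleton]
  have hnopend (X : Set (GV 0)) :
      ((X.toFinset.map .some : Finset _) : Set (Option (GV 0))) = some '' X := by
    simp
  refine ⟨fun X hX => ?_, fun X hX hroot => ?_⟩
  · by_contra! h
    obtain ⟨x, hx⟩ := (forcingStalls_hatGtree_zero X.toFinset).1
      (by rw [← hcard]; exact Nat.le_of_lt_succ h)
    exact hx.not_zfClosure (by rw [hpend]; exact hX x)
  · by_contra! h
    rcases (forcingStalls_hatGtree_zero X.toFinset).2 (by rw [← hcard]; simpa [tseq] using h)
      with ⟨x, hx⟩ | hx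
    · exact hx.not_zfClosure (by rw [hpend]; exact hX x)
    · exact hx.not_zfClosure (by rw [hnopend]; exact hroot)

theorem hatGtree_force {T : Set (Option (GV n))} {x y : GV n} (hyx : (Gtree n).Adj y x)
    (hy : ZFClosure (hatGtree n) T (some y))
    (hnbr : ∀ z, (Gtree n).Adj y z → z ≠ x → ZFClosure (hatGtree n) T (some z))
    (hpend : y = rootV n → ZFClosure (hatGtree n) T none) :
    ZFClosure (hatGtree n) T (some x) := by
  refine .force _ _ (by simpa using hyx) hy fun v hv hne => ?_
  cases v with
  | none => exact hpend (by simpa using hv)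
  | some z => exact hnbr z (by simpa using hv) (fun h => hne (h ▸ rfl))

theorem ForcesWithPendant.preimage_child {X : Set (GV (n + 1))} (hX : ForcesWithPendant X)
    (b c : Bool) : ForcesWithPendant (GV.child b c ⁻¹' X) := by
  suffices key : ∀ v, ZFClosure (hatGtree (n + 1)) (some '' X ∪ {none}) v → ∀ x,
      v = some (.child b c x) →
      ZFClosure (hatGtree n) (some '' (GV.child b c ⁻¹' X) ∪ {none}) (some x) from
    fun x => key _ (hX _) x rfl
  intro v h
  induction h with
  | init v hv =>
    rintro x rfl
    exact .init _ (by simpa using hv)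
  | force u w hadj _ _ ihw ihprem =>
    rintro x rfl
    rcases w with _ | _ | _ | b' | ⟨b', c', y⟩
    · simp at hadj
    · simp at hadj
    · obtain ⟨rfl, rfl⟩ := by simpa using hadj
      refine .force _ none (by simp) (.init _ (by simp)) fun v hv hne => ?_
      cases v with
      | none => simp at hv
      | some z => exact absurd (by simpa using hv) (hne ∘ congrArg some)
    · obtain ⟨rfl, rfl, hyx⟩ := by simpa using hadj
      exact hatGtree_force hyx (ihw y rfl)
        (fun z hz hzx => ihprem _ (by simpa using hz) (by simpa using hzx) z rfl)
        fun _ => .init _ (by simp)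

end LowerBound

section LowerStep

variable {n : ℕ}

theorem PendantBounds.two_mul_tseq_lt (hL : PendantBounds n) {X : Set (GV (n + 1))}
    (hX : ForcesWithPendant X) (b : Bool) :
    2 * tseq n < (GV.child b true ⁻¹' X).ncard + (GV.child b false ⁻¹' X).ncard := by
  have hle := fun c => hL.le_ncard _ (hX.preimage_child b c)
  by_contra! hsmall
  have hwhite (c : Bool) :
      ¬ ZFClosure (hatGtree n) (some '' (GV.child b c ⁻¹' X)) (some (rootV n)) := fun h => by
    have := hL.lt_ncard _ (hX.preimage_child b c) h
    have := hle true
    have := hle false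
    cases c <;> omega
  suffices key : ∀ v, ZFClosure (hatGtree (n + 1)) (some '' X ∪ {none}) v → ∀ c x,
      v = some (.child b c x) → ZFClosure (hatGtree n) (some '' (GV.child b c ⁻¹' X)) (some x) from
    hwhite true (key _ (hX _) true _ rfl)
  intro v h
  induction h with
  | init v hv =>
    rintro c x rfl
    exact .init _ (by simpa using hv)
  | force u w hadj _ _ ihw ihprem =>
    rintro c x rfl
    rcases w with _ | _ | _ | b' | ⟨b', c', y⟩
    · simp at hadj
    · simp at hadj
    · obtain ⟨hb, rfl⟩ := by simpa using hadj
      subst b'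
      exact absurd (ihprem (some (.child b (!c) (rootV n))) (by simp) (by simp) _ _ rfl)
        (hwhite _)
    · obtain ⟨rfl, rfl, hyx⟩ := by simpa using hadj
      have hy := ihw _ y rfl
      exact hatGtree_force hyx hy
        (fun z hz hzx => ihprem _ (by simpa using hz) (by simpa using hzx) _ z rfl)
        fun h => absurd (h ▸ hy) (hwhite _)

theorem PendantBounds.not_zfClosure_root (hL : PendantBounds n) {X : Set (GV (n + 1))}
    (hX : ForcesWithPendant X) (hroot : GV.root ∉ X)
    (hsmall : ∀ b, ∃ c, (GV.child b c ⁻¹' X).ncard ≤ tseq n) :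
    ¬ ZFClosure (hatGtree (n + 1)) (some '' X) (some .root) := by
  choose c hc using hsmall
  have hwhite (b : Bool) :
      ¬ ZFClosure (hatGtree n) (some '' (GV.child b (c b) ⁻¹' X)) (some (rootV n)) := fun h =>
    (hL.lt_ncard _ (hX.preimage_child b (c b)) h).not_ge (hc b)
  suffices key : ∀ v, ZFClosure (hatGtree (n + 1)) (some '' X) v → v ≠ none ∧ v ≠ some .root ∧
      ∀ b x, v = some (.child b (c b) x) →
        ZFClosure (hatGtree n) (some '' (GV.child b (c b) ⁻¹' X)) (some x) from
    fun h => (key _ h).2.1 rfl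
  intro v h
  induction h with
  | init v hv =>
    obtain ⟨v, hv, rfl⟩ := hv
    refine ⟨by simp, fun h => hroot (Option.some_injective _ h ▸ hv), ?_⟩
    rintro b x ⟨⟩
    exact .init _ ⟨x, hv, rfl⟩
  | force u w hadj _ _ ihw ihprem =>
    rcases u with _ | _ | _ | b | ⟨b, c', x⟩
    · obtain rfl : w = some .root := by rcases w with _ | _ | _ | _ | _ <;> simp_all
      exact absurd rfl ihw.2.1
    · rcases w with _ | _ | _ | b | _
      · exact absurd rfl ihw.1
      · simp at hadj
      · exact absurd ((ihprem _ (by simp) (by simp)).2.2 b _ rfl) (hwhite b)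
      · simp at hadj
    · simp
    · refine ⟨by simp, by simp, ?_⟩
      rintro b x ⟨⟩
      rcases w with _ | _ | _ | b' | ⟨b', c', y⟩
      · simp at hadj
      · simp at hadj
      · exact absurd rfl (ihprem (some .root) (by simp_all) (by simp)).2.1
      · obtain ⟨rfl, rfl, hyx⟩ := by simpa using hadj
        have hy := ihw.2.2 _ y rfl
        exact hatGtree_force hyx hy
          (fun z hz hzx => (ihprem _ (by simpa using hz) (by simpa using hzx)).2.2 _ z rfl)
          fun h => absurd (h ▸ hy) (hwhite _)

open scoped Classical in
theorem sum_ncard_preimage_child_le (X : Set (GV (n + 1))) :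
    (GV.child true true ⁻¹' X).ncard + (GV.child true false ⁻¹' X).ncard +
      (GV.child false true ⁻¹' X).ncard + (GV.child false false ⁻¹' X).ncard +
      (if GV.root ∈ X then 1 else 0) ≤ X.ncard := by
  classical
  set F : Bool → Bool → Finset (GV n) := fun b c => (GV.child b c ⁻¹' X).toFinset
  have hsub : childFinset F ⊆ X.toFinset := by
    intro v hv
    rcases v with _ | _ | _ | ⟨b, c, x⟩
    · simp at hv
    · simp [childFinset] at hv
    · simpa [F] using hv
  have hcard := card_childFinset F
  simp only [F, ← Set.ncard_eq_toFinset_card'] at hcard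
  rw [← hcard, Set.ncard_eq_toFinset_card' X]
  split_ifs with hroot
  · rw [← Finset.card_insert_of_notMem root_notMem_childFinset]
    exact Finset.card_le_card (Finset.insert_subset (by simpa using hroot) hsub)
  · simpa using Finset.card_le_card hsub

theorem PendantBounds.succ (hL : PendantBounds n) : PendantBounds (n + 1) := by
  have htseq : tseq (n + 1) = 4 * tseq n + 2 := rfl
  refine ⟨fun X hX => ?_, fun X hX hroot => ?_⟩
  · have hpart := sum_ncard_preimage_child_le X
    have := hL.two_mul_tseq_lt hX true
    have := hL.two_mul_tseq_lt hX false
    split_ifs at hpart <;> omega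
  · have hpart := sum_ncard_preimage_child_le X
    have hT := hL.two_mul_tseq_lt hX true
    have hF := hL.two_mul_tseq_lt hX false
    by_contra! hle
    have hrootX : GV.root ∉ X := fun h => by simp only [h, if_true] at hpart; omega
    refine hL.not_zfClosure_root hX hrootX (fun b => ?_) hroot
    by_contra! hbig
    have := hbig true
    have := hbig false
    cases b <;> omega

theorem pendantBounds : ∀ n, PendantBounds n
  | 0 => pendantBounds_zero
  | n + 1 => (pendantBounds n).succ

end LowerStep

section Transfer

variable {n : ℕ} {S : Set (GV n)}

theorem ZFClosure.hatGtree_with_pendant {v : GV n} (h : ZFClosure (Gtree n) S v) :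
    ZFClosure (hatGtree n) (some '' S ∪ {none}) (some v) := by
  induction h with
  | init v hv => exact .init _ (.inl ⟨v, hv, rfl⟩)
  | force u w hadj _ _ ihw ihprem =>
    refine .force _ _ (by simpa using hadj) ihw fun v hv hne => ?_
    cases v with
    | none => exact .init _ (.inr rfl)
    | some y => exact ihprem y (by simpa using hv) (hne ∘ congrArg some)

/-- Without the pendant, forcing in `Ĝ_n` keeps pace with forcing in `G_n` until the root, the
only vertex with a new neighbour, is black. -/
theorem ZFClosure.hatGtree_or_root {v : GV n} (h : ZFClosure (Gtree n) S v) :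
    ZFClosure (hatGtree n) (some '' S) (some v) ∨
      ZFClosure (hatGtree n) (some '' S) (some (rootV n)) := by
  induction h with
  | init v hv => exact .inl (.init _ ⟨v, hv, rfl⟩)
  | force u w hadj _ _ ihw ihprem =>
    by_cases hR : ZFClosure (hatGtree n) (some '' S) (some (rootV n))
    · exact .inr hR
    have hw := ihw.resolve_right hR
    refine .inl (.force _ _ (by simpa using hadj) hw fun v hv hne => ?_)
    cases v with
    | none => exact absurd ((by simpa using hv : w = rootV n) ▸ hw) hR
    | some y => exact (ihprem y (by simpa using hv) (hne ∘ congrArg some)).resolve_right hR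

end Transfer

theorem tseq_lt_ncard_of_isZeroForcingSet_Gtree {n : ℕ} {S : Set (GV n)}
    (hS : IsZeroForcingSet (Gtree n) S) : tseq n < S.ncard :=
  (pendantBounds n).lt_ncard S (fun x => (hS x).hatGtree_with_pendant)
    ((hS _).hatGtree_or_root.elim id id)

theorem tseq_lt_ncard_of_isZeroForcingSet_hatGtree {n : ℕ} {S : Set (Option (GV n))}
    (hS : IsZeroForcingSet (hatGtree n) S) : tseq n < S.ncard := by
  have hsome : (some '' (some ⁻¹' S) : Set (Option (GV n))) = S \ {none} := by
    ext (_ | x) <;> simp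
  have hcard : (some ⁻¹' S).ncard = (S \ {none}).ncard := by
    rw [← hsome, Set.ncard_image_of_injective _ (Option.some_injective _)]
  by_cases hnone : none ∈ S
  · have hS' : some '' (some ⁻¹' S) ∪ {none} = S := by
      rw [hsome, Set.sdiff_union_self, Set.union_eq_left.mpr (by simpa using hnone)]
    have := (pendantBounds n).le_ncard _ fun x => hS' ▸ hS (some x)
    rw [← Set.ncard_sdiff_singleton_add_one hnone]
    omega
  · have hS' : some '' (some ⁻¹' S) = S := by rw [hsome, Set.sdiff_singleton_eq_self hnone]
    have hroot : ZFClosure (hatGtree n) S (some (rootV n)) := by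
      cases hS none with
      | init _ hv => exact absurd hv hnone
      | force _ w hadj hw _ =>
        rcases w with _ | w
        · simp at hadj
        · rwa [(by simpa using hadj : w = rootV n)] at hw
    have := (pendantBounds n).lt_ncard _
      (fun x => (hS (some x)).mono (by rw [hS']; exact Set.subset_union_left)) (by rwa [hS'])
    rwa [hcard, Set.sdiff_singleton_eq_self hnone] at this

/-- `Z(G_{n+1}) = Z(Ĝ_{n+1}) = t_{n+1} + 1`. -/
theorem zeroForcingNumber_Gtree (n : ℕ) :
    zeroForcingNumber (Gtree n) = tseq n + 1 ∧
    zeroForcingNumber (hatGtree n) = tseq n + 1 := by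
  constructor
  · refine IsLeast.csInf_eq ⟨exists_isZeroForcingSet_Gtree n, ?_⟩
    rintro _ ⟨S, rfl, hS⟩
    exact tseq_lt_ncard_of_isZeroForcingSet_Gtree hS
  · refine IsLeast.csInf_eq ⟨exists_isZeroForcingSet_hatGtree n, ?_⟩
    rintro _ ⟨S, rfl, hS⟩
    exact tseq_lt_ncard_of_isZeroForcingSet_hatGtree hS
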